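/- Let r be a k-restraint on the complete graph K_n. Then r maximizes π_r(K_n, x) for all sufficiently large x among all k-restraints if and only if r is a proper restraint, i.e. the sets r(u), u ∈ V(K_n), are pairwise disjoint. -/

import Mathlib

/-- The number of proper `x`-colourings of `G` (colours `1,…,x`) permitted by the restraint `r`,
i.e. proper colourings `c` with `c v ∉ r v` for all `v`. -/
noncomputable def rcount {V : Type} [Fintype V] (G : SimpleGraph V) (r : V → Finset ℕ)
    (x : ℕ) : ℕ := by
  classical
  exact ((Fintype.piFinset fun _ : V => Finset.Icc 1 x).filter
    (fun c => (∀ v w, G.Adj v w → c v ≠ c w) ∧ ∀ v, c v ∉ r v)).card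

/-!
Proper colourings of `K_n` are injective maps. For a colouring `c` let `t(c)` be the number of
vertices where `c` meets the restraint, and let `S_j = ∑_c C(t(c), j)`. Counting pairs (`c`, a
`j`-set of vertices violated by `c`), a fixed `j`-set `q` is violated at every vertex by
`τ(q) · (x - j)_(n - j)` colourings, where `τ(q)` is the number of transversals of
`(r v)_{v ∈ q}` and `(a)_b` is the falling factorial. For a proper restraint `τ(q) = k^|q|`, so by
inclusion–exclusion `π_r` is the same for all proper restraints. An improper restraint has the
same `S_1`, but an overlap `r u ∩ r v ≠ ∅` loses at least one transversal of `{u, v}`, so its `S_2`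
is smaller by at least `(x - 2)_(n - 2)`, which for large `x` exceeds the `S_3` of a proper
restraint, `C(n, 3) k^3 (x - 3)_(n - 3)`. With `I` the number of injective colourings, the
Bonferroni inequalities `I - S_1 + S_2 - S_3 ≤ π_r ≤ I - S_1 + S_2` then make `π_r` strictly
smaller.
-/

open Finset Function

theorem Finset.sum_sum_powerset_comm {α V M : Type*} [Fintype V] [DecidableEq V]
    [AddCommMonoid M] (s : Finset α) (f : α → Finset V) (g : Finset V → M) :
    ∑ a ∈ s, ∑ q ∈ (f a).powerset, g q = ∑ q, #{a ∈ s | q ⊆ f a} • g q := by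
  rw [sum_comm' (t' := univ) (s' := fun q => {a ∈ s | q ⊆ f a}) (by simp)]
  simp_rw [sum_const]

theorem Nat.ite_eq_zero_add_le_one_add_choose_two (t : ℕ) :
    (if t = 0 then 1 else 0) + t ≤ 1 + t.choose 2 := by
  rcases t with _ | s
  · simp
  · rw [if_neg s.succ_ne_zero, Nat.choose_succ_succ s 1, Nat.choose_one_right]
    omega

theorem Nat.one_add_choose_two_le_ite_eq_zero_add_add_choose_three (t : ℕ) :
    1 + t.choose 2 ≤ (if t = 0 then 1 else 0) + t + t.choose 3 := by
  rcases t with _ | s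
  · simp
  · have h2 : (s + 1).choose 2 = s + s.choose 2 := by
      rw [Nat.choose_succ_succ, Nat.choose_one_right]
    have h3 : (s + 1).choose 3 = s.choose 2 + s.choose 3 := Nat.choose_succ_succ s 2
    rw [if_neg s.succ_ne_zero]
    omega

def injColourings (V : Type*) [Fintype V] [DecidableEq V] (x : ℕ) : Finset (V → ℕ) :=
  {c ∈ Fintype.piFinset fun _ => Icc 1 x | Injective c}

def transversals {V : Type*} [DecidableEq V] (r : V → Finset ℕ) (q : Finset V) :
    Finset (q → ℕ) :=
  {φ ∈ Fintype.piFinset fun v : q => r v | Injective φ}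

def IsRestraint {V : Type*} (k x : ℕ) (r : V → Finset ℕ) : Prop :=
  ∀ v, #(r v) = k ∧ r v ⊆ Icc 1 x

theorem IsRestraint.mono {V : Type*} {k x y : ℕ} {r : V → Finset ℕ} (hr : IsRestraint k x r)
    (hxy : x ≤ y) : IsRestraint k y r :=
  fun v => ⟨(hr v).1, (hr v).2.trans (Icc_subset_Icc_right hxy)⟩

section Colourings

variable {V : Type*} [Fintype V] [DecidableEq V] {x : ℕ}

theorem mem_injColourings {c : V → ℕ} :
    c ∈ injColourings V x ↔ (∀ v, c v ∈ Icc 1 x) ∧ Injective c := by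
  simp [injColourings]

theorem dite_mem_injColourings {s : Finset V} {φ : s → ℕ} {ψ : ↥sᶜ → ℕ} (hφ : Injective φ)
    (hψ : Injective ψ) (hφψ : ∀ u w, φ u ≠ ψ w) (hφx : ∀ u, φ u ∈ Icc 1 x)
    (hψx : ∀ w, ψ w ∈ Icc 1 x) :
    (fun v => if h : v ∈ s then φ ⟨v, h⟩ else ψ ⟨v, mem_compl.2 h⟩) ∈ injColourings V x := by
  refine mem_injColourings.2 ⟨fun v => ?_, fun v w hvw => ?_⟩
  · split_ifs
    exacts [hφx _, hψx _]
  by_cases hv : v ∈ s <;> by_cases hw : w ∈ s <;>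
    simp only [hv, hw, dif_pos, dif_neg, not_false_eq_true] at hvw
  · exact congrArg Subtype.val (hφ hvw)
  · exact absurd hvw (hφψ _ _)
  · exact absurd hvw.symm (hφψ _ _)
  · exact congrArg Subtype.val (hψ hvw)

theorem card_injColourings_extending (s : Finset V) (φ : s → ℕ) (hφ : Injective φ)
    (hφx : ∀ v, φ v ∈ Icc 1 x) :
    #{c ∈ injColourings V x | ∀ v : s, c v = φ v} =
      (x - #s).descFactorial (Fintype.card V - #s) := by
  set T := Icc 1 x \ univ.image φ
  have e : {c // c ∈ {c ∈ injColourings V x | ∀ v : s, c v = φ v}} ≃ (↥sᶜ ↪ T) := by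
    refine
      { toFun := fun c => ⟨fun v => ⟨c.1 v, ?_⟩, ?_⟩
        invFun := fun f => ⟨fun v => if h : v ∈ s then φ ⟨v, h⟩ else f ⟨v, mem_compl.2 h⟩, ?_⟩
        left_inv := ?_
        right_inv := ?_ }
    · obtain ⟨hc, hcφ⟩ := mem_filter.1 c.2
      refine mem_sdiff.2 ⟨(mem_injColourings.1 hc).1 v, fun hv => ?_⟩
      obtain ⟨w, -, hw⟩ := mem_image.1 hv
      rw [← hcφ w] at hw
      exact mem_compl.1 v.2 ((mem_injColourings.1 hc).2 hw ▸ w.2)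
    · intro v w hvw
      exact Subtype.ext ((mem_injColourings.1 (mem_filter.1 c.2).1).2 (congrArg Subtype.val hvw))
    · refine mem_filter.2 ⟨dite_mem_injColourings hφ (Subtype.val_injective.comp f.injective)
        (fun u w h => (mem_sdiff.1 (f w).2).2 (mem_image.2 ⟨u, mem_univ u, h⟩)) hφx
        (fun w => (mem_sdiff.1 (f w).2).1), fun v => by simp⟩
    · intro c
      ext v
      by_cases hv : v ∈ s
      · simp [hv, (mem_filter.1 c.2).2 ⟨v, hv⟩]
      · simp only [hv, dif_neg, not_false_eq_true]
        rfl
    · intro f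
      ext v
      simp [mem_compl.1 v.2]
  rw [← Fintype.card_coe, Fintype.card_congr e, Fintype.card_embedding_eq, Fintype.card_coe,
    Fintype.card_coe, card_sdiff_of_subset (image_subset_iff.2 fun v _ => hφx v),
    card_image_of_injective _ hφ, Nat.card_Icc, card_compl, card_univ, Fintype.card_coe,
    add_tsub_cancel_right]

end Colourings

section Transversals

variable {V : Type*} [DecidableEq V] {r : V → Finset ℕ} {k : ℕ}

theorem card_transversals_le (hr : ∀ v, #(r v) = k) (q : Finset V) :
    #(transversals r q) ≤ k ^ #q := by
  refine (card_filter_le _ _).trans_eq ?_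
  simp [hr]

theorem card_transversals_of_pairwiseDisjoint (hr : ∀ v, #(r v) = k) {q : Finset V}
    (hq : (q : Set V).PairwiseDisjoint r) : #(transversals r q) = k ^ #q := by
  rw [transversals, filter_true_of_mem]
  · simp [hr]
  intro φ hφ v w hvw
  rw [Fintype.mem_piFinset] at hφ
  by_contra hne
  exact disjoint_left.1 (hq v.2 w.2 fun h => hne (Subtype.ext h)) (hφ v) (hvw ▸ hφ w)

theorem card_transversals_pair_lt (hr : ∀ v, #(r v) = k) {u v : V} (huv : u ≠ v)
    (huv' : ¬Disjoint (r u) (r v)) : #(transversals r {u, v}) < k ^ 2 := by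
  obtain ⟨a, hau, hav⟩ := not_disjoint_iff.1 huv'
  have hconst : (fun _ => a) ∈ Fintype.piFinset fun w : ({u, v} : Finset V) => r w := by
    refine Fintype.mem_piFinset.2 fun ⟨w, hw⟩ => ?_
    rcases mem_insert.1 hw with rfl | hw
    · exact hau
    · obtain rfl := mem_singleton.1 hw
      exact hav
  have hnotinj : ¬Injective fun _ : ({u, v} : Finset V) => a := fun h =>
    huv (congrArg Subtype.val (@h ⟨u, by simp⟩ ⟨v, by simp⟩ rfl))
  calc #(transversals r {u, v}) < #(Fintype.piFinset fun w : ({u, v} : Finset V) => r w) :=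
        card_lt_card (filter_ssubset.2 ⟨_, hconst, hnotinj⟩)
    _ = k ^ 2 := by
      rw [Fintype.card_piFinset]
      simp only [hr, prod_const, card_univ, Fintype.card_coe, card_pair huv]

end Transversals

section Restraints

variable {V : Type*} [Fintype V] [DecidableEq V]

def violations (r : V → Finset ℕ) (c : V → ℕ) : Finset V := {v | c v ∈ r v}

def restrainedCount (r : V → Finset ℕ) (x : ℕ) : ℕ :=
  #{c ∈ injColourings V x | violations r c = ∅}

def numViolatingOn (r : V → Finset ℕ) (x : ℕ) (q : Finset V) : ℕ :=
  #{c ∈ injColourings V x | q ⊆ violations r c}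

def binomialMoment (r : V → Finset ℕ) (x j : ℕ) : ℕ :=
  ∑ c ∈ injColourings V x, (#(violations r c)).choose j

variable (r : V → Finset ℕ) (x : ℕ)

theorem binomialMoment_eq_sum_numViolatingOn (j : ℕ) :
    binomialMoment r x j = ∑ q ∈ powersetCard j univ, numViolatingOn r x q := by
  have hchoose (A : Finset V) : (#A).choose j = ∑ q ∈ A.powerset, if #q = j then 1 else 0 := by
    rw [← card_powersetCard, powersetCard_eq_filter, card_filter]
  simp_rw [binomialMoment, hchoose, sum_sum_powerset_comm, smul_ite, smul_zero, ← sum_filter,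
    smul_eq_mul, mul_one, numViolatingOn, powersetCard_eq_filter]
  rfl

theorem restrainedCount_eq_sum_powerset :
    (restrainedCount r x : ℤ) = ∑ q, (-1 : ℤ) ^ #q * numViolatingOn r x q := by
  simp_rw [restrainedCount, card_filter, Nat.cast_sum, Nat.cast_ite, Nat.cast_one,
    Nat.cast_zero, ← sum_powerset_neg_one_pow_card, sum_sum_powerset_comm, nsmul_eq_mul',
    numViolatingOn]

theorem restrainedCount_add_binomialMoment_one_le :
    restrainedCount r x + binomialMoment r x 1 ≤ #(injColourings V x) + binomialMoment r x 2 := by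
  simp only [restrainedCount, binomialMoment, card_filter, card_eq_sum_ones (injColourings V x),
    ← sum_add_distrib, ← card_eq_zero, Nat.choose_one_right]
  exact sum_le_sum fun c _ => Nat.ite_eq_zero_add_le_one_add_choose_two _

theorem card_injColourings_add_binomialMoment_two_le :
    #(injColourings V x) + binomialMoment r x 2 ≤
      restrainedCount r x + binomialMoment r x 1 + binomialMoment r x 3 := by
  simp only [restrainedCount, binomialMoment, card_filter, card_eq_sum_ones (injColourings V x),
    ← sum_add_distrib, ← card_eq_zero, Nat.choose_one_right]
  exact sum_le_sum fun c _ => Nat.one_add_choose_two_le_ite_eq_zero_add_add_choose_three _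

variable {r r' : V → Finset ℕ} {k x : ℕ}

theorem numViolatingOn_eq (hrx : ∀ v, r v ⊆ Icc 1 x) (q : Finset V) :
    numViolatingOn r x q =
      #(transversals r q) * (x - #q).descFactorial (Fintype.card V - #q) := by
  have hmaps : Set.MapsTo (fun (c : V → ℕ) (v : q) => c v)
      ({c ∈ injColourings V x | q ⊆ violations r c} : Finset (V → ℕ))
      (transversals r q : Set (q → ℕ)) := by
    intro c hc
    obtain ⟨hc, hq⟩ := mem_filter.1 hc
    exact mem_filter.2 ⟨Fintype.mem_piFinset.2 fun v => (mem_filter.1 (hq v.2)).2,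
      (mem_injColourings.1 hc).2.comp Subtype.val_injective⟩
  rw [numViolatingOn, card_eq_sum_card_fiberwise hmaps, ← smul_eq_mul, ← sum_const]
  refine sum_congr rfl fun φ hφ => ?_
  obtain ⟨hφr, hφ⟩ := mem_filter.1 hφ
  rw [Fintype.mem_piFinset] at hφr
  rw [filter_filter, ← card_injColourings_extending q φ hφ fun v => hrx v (hφr v)]
  congr 1
  refine filter_congr fun c _ => ⟨fun h v => congrFun h.2 v, fun h => ⟨fun v hv => ?_, funext h⟩⟩
  exact mem_filter.2 ⟨mem_univ v, h ⟨v, hv⟩ ▸ hφr ⟨v, hv⟩⟩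


theorem binomialMoment_eq_sum_card_transversals (hrx : ∀ v, r v ⊆ Icc 1 x) (j : ℕ) :
    binomialMoment r x j = (∑ q ∈ powersetCard j univ, #(transversals r q)) *
      (x - j).descFactorial (Fintype.card V - j) := by
  rw [binomialMoment_eq_sum_numViolatingOn, sum_mul]
  refine sum_congr rfl fun q hq => ?_
  rw [numViolatingOn_eq hrx, (mem_powersetCard.1 hq).2]

theorem binomialMoment_le (hr : IsRestraint k x r) (j : ℕ) :
    binomialMoment r x j ≤
      (Fintype.card V).choose j * k ^ j * (x - j).descFactorial (Fintype.card V - j) := by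
  rw [binomialMoment_eq_sum_card_transversals fun v => (hr v).2]
  gcongr
  refine (sum_le_card_nsmul _ _ (k ^ j) fun q hq => ?_).trans_eq ?_
  · exact (card_transversals_le (fun v => (hr v).1) q).trans_eq
      (by rw [(mem_powersetCard.1 hq).2])
  · simp [card_powersetCard]

theorem binomialMoment_eq_of_pairwiseDisjoint (hr : IsRestraint k x r) {j : ℕ}
    (hj : ∀ q : Finset V, #q = j → (q : Set V).PairwiseDisjoint r) :
    binomialMoment r x j =
      (Fintype.card V).choose j * k ^ j * (x - j).descFactorial (Fintype.card V - j) := by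
  rw [binomialMoment_eq_sum_card_transversals fun v => (hr v).2]
  congr 1
  rw [sum_congr rfl fun q hq => (card_transversals_of_pairwiseDisjoint (fun v => (hr v).1)
    (hj q (mem_powersetCard.1 hq).2)).trans (by rw [(mem_powersetCard.1 hq).2])]
  simp [card_powersetCard]

theorem binomialMoment_one (hr : IsRestraint k x r) :
    binomialMoment r x 1 = Fintype.card V * k * (x - 1).descFactorial (Fintype.card V - 1) := by
  rw [binomialMoment_eq_of_pairwiseDisjoint hr fun q hq => ?_, Nat.choose_one_right, pow_one]
  obtain ⟨w, rfl⟩ := card_eq_one.1 hq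
  simp

theorem binomialMoment_two_add_le (hr : IsRestraint k x r) {u v : V} (huv : u ≠ v)
    (huv' : ¬Disjoint (r u) (r v)) :
    binomialMoment r x 2 + (x - 2).descFactorial (Fintype.card V - 2) ≤
      (Fintype.card V).choose 2 * k ^ 2 * (x - 2).descFactorial (Fintype.card V - 2) := by
  set P := powersetCard 2 (univ : Finset V)
  have hP : {u, v} ∈ P := mem_powersetCard.2 ⟨subset_univ _, card_pair huv⟩
  have hrest : ∑ q ∈ P.erase {u, v}, #(transversals r q) ≤ ∑ q ∈ P.erase {u, v}, k ^ 2 :=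
    sum_le_sum fun q hq => (card_transversals_le (fun v => (hr v).1) q).trans_eq
      (by rw [(mem_powersetCard.1 (mem_of_mem_erase hq)).2])
  have hsum : ∑ q ∈ P, #(transversals r q) + 1 ≤ (Fintype.card V).choose 2 * k ^ 2 := by
    have hpair := card_transversals_pair_lt (fun v => (hr v).1) huv huv'
    have hconst := add_sum_erase P (fun _ => k ^ 2) hP
    have hcard : ∑ _ ∈ P, k ^ 2 = (Fintype.card V).choose 2 * k ^ 2 := by
      simp [P, card_powersetCard]
    rw [← add_sum_erase P (fun q => #(transversals r q)) hP]
    omega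
  rw [binomialMoment_eq_sum_card_transversals fun v => (hr v).2]
  exact (add_one_mul _ _).symm.le.trans (Nat.mul_le_mul_right _ hsum)

theorem binomialMoment_three_lt (hr : IsRestraint k x r) (hxV : Fintype.card V ≤ x)
    (hx : (Fintype.card V).choose 3 * k ^ 3 < x - 2) :
    binomialMoment r x 3 < (x - 2).descFactorial (Fintype.card V - 2) := by
  refine (binomialMoment_le hr 3).trans_lt ?_
  rcases lt_or_ge (Fintype.card V) 3 with hV | hV
  · rw [Nat.choose_eq_zero_of_lt hV, zero_mul, zero_mul, Nat.pos_iff_ne_zero, Ne,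
      Nat.descFactorial_eq_zero_iff_lt]
    omega
  · have hD : (x - 2).descFactorial (Fintype.card V - 2) =
        (x - 2) * (x - 3).descFactorial (Fintype.card V - 3) := by
      rw [show x - 2 = x - 3 + 1 by omega,
        show Fintype.card V - 2 = Fintype.card V - 3 + 1 by omega, Nat.succ_descFactorial_succ]
    rw [hD]
    refine Nat.mul_lt_mul_of_pos_right hx (Nat.pos_of_ne_zero fun h => ?_)
    rw [Nat.descFactorial_eq_zero_iff_lt] at h
    omega

theorem restrainedCount_eq_of_pairwise_disjoint (hr : IsRestraint k x r)
    (hdisj : Pairwise (Disjoint on r)) (hr' : IsRestraint k x r')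
    (hdisj' : Pairwise (Disjoint on r')) : restrainedCount r x = restrainedCount r' x := by
  have hW (q : Finset V) : numViolatingOn r x q = numViolatingOn r' x q := by
    rw [numViolatingOn_eq fun v => (hr v).2, numViolatingOn_eq fun v => (hr' v).2,
      card_transversals_of_pairwiseDisjoint (fun v => (hr v).1) (hdisj.set_pairwise _),
      card_transversals_of_pairwiseDisjoint (fun v => (hr' v).1) (hdisj'.set_pairwise _)]
  have := restrainedCount_eq_sum_powerset r x
  simp_rw [hW, ← restrainedCount_eq_sum_powerset r' x] at this
  exact_mod_cast this

theorem restrainedCount_lt_of_not_disjoint (hr : IsRestraint k x r)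
    (hdisj : Pairwise (Disjoint on r)) (hr' : IsRestraint k x r') {u v : V} (huv : u ≠ v)
    (huv' : ¬Disjoint (r' u) (r' v)) (hxV : Fintype.card V ≤ x)
    (hx : (Fintype.card V).choose 3 * k ^ 3 < x - 2) :
    restrainedCount r' x < restrainedCount r x := by
  have hS1 : binomialMoment r' x 1 = binomialMoment r x 1 := by
    rw [binomialMoment_one hr, binomialMoment_one hr']
  have hS2 := binomialMoment_two_add_le hr' huv huv'
  rw [← binomialMoment_eq_of_pairwiseDisjoint hr fun q _ => hdisj.set_pairwise _] at hS2
  have hS3 := binomialMoment_three_lt hr hxV hx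
  have hupper := restrainedCount_add_binomialMoment_one_le r' x
  have hlower := card_injColourings_add_binomialMoment_two_le r x
  omega

end Restraints

theorem rcount_top_eq_restrainedCount {V : Type} [Fintype V] [DecidableEq V]
    (r : V → Finset ℕ) (x : ℕ) : rcount (⊤ : SimpleGraph V) r x = restrainedCount r x := by
  classical
  rw [rcount, restrainedCount, injColourings, filter_filter]
  congr 1
  ext c
  simp [violations, filter_eq_empty_iff, injective_iff_pairwise_ne, Pairwise]

def blockRestraint (n k : ℕ) (v : Fin n) : Finset ℕ := Ioc (k * v) (k * v + k)

theorem isRestraint_blockRestraint (n k : ℕ) : IsRestraint k (k * n) (blockRestraint n k) := by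
  intro v
  refine ⟨by simp [blockRestraint], fun a ha => ?_⟩
  have hv : k * (v + 1) ≤ k * n := Nat.mul_le_mul_left k v.isLt
  simp only [blockRestraint, mem_Ioc, mem_Icc] at ha ⊢
  rw [mul_add_one] at hv
  omega

theorem pairwise_disjoint_blockRestraint (n k : ℕ) :
    Pairwise (Disjoint on blockRestraint n k) := by
  intro u v huv
  wlog h : u < v generalizing u v
  · exact (this huv.symm (huv.symm.lt_of_le (not_lt.1 h))).symm
  have hv : k * (u + 1) ≤ k * v := Nat.mul_le_mul_left k h
  rw [mul_add_one] at hv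
  simp only [onFun, blockRestraint, disjoint_left, mem_Ioc]
  omega

theorem stmt10 (n k : ℕ) (r : Fin n → Finset ℕ)
    (hr : ∀ v : Fin n, (r v).card = k ∧ r v ⊆ Finset.Icc 1 (k * n)) :
    (∃ N : ℕ, ∀ x ≥ N, ∀ r' : Fin n → Finset ℕ,
        (∀ v : Fin n, (r' v).card = k ∧ r' v ⊆ Finset.Icc 1 (k * n)) →
        rcount (⊤ : SimpleGraph (Fin n)) r' x ≤ rcount (⊤ : SimpleGraph (Fin n)) r x) ↔
      ∀ u v : Fin n, u ≠ v → Disjoint (r u) (r v) := by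
  simp only [rcount_top_eq_restrainedCount]
  set N := k * n + n + n.choose 3 * k ^ 3 + 3
  have hlt {x : ℕ} (hx : N ≤ x) {ρ ρ' : Fin n → Finset ℕ} (hρ : IsRestraint k (k * n) ρ)
      (hdisj : Pairwise (Disjoint on ρ)) (hρ' : IsRestraint k (k * n) ρ') {u v : Fin n}
      (huv : u ≠ v) (huv' : ¬Disjoint (ρ' u) (ρ' v)) : restrainedCount ρ' x < restrainedCount ρ x :=
    restrainedCount_lt_of_not_disjoint (hρ.mono (by omega)) hdisj (hρ'.mono (by omega)) huv huv'
      (by rw [Fintype.card_fin]; omega) (by rw [Fintype.card_fin]; omega)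
  constructor
  · rintro ⟨M, hM⟩ u v huv
    by_contra huv'
    exact (hlt (le_max_right M N) (isRestraint_blockRestraint n k)
      (pairwise_disjoint_blockRestraint n k) hr huv huv').not_ge
      (hM _ (le_max_left M N) _ (isRestraint_blockRestraint n k))
  · intro hdisj
    refine ⟨N, fun x hx r' hr' => ?_⟩
    by_cases hdisj' : Pairwise (Disjoint on r')
    · exact (restrainedCount_eq_of_pairwise_disjoint (IsRestraint.mono hr' (by omega)) hdisj'
        (IsRestraint.mono hr (by omega)) fun _ _ huv => hdisj _ _ huv).le
    · obtain ⟨u, v, huv, huv'⟩ : ∃ u v, u ≠ v ∧ ¬Disjoint (r' u) (r' v) := by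
        simpa [Pairwise] using hdisj'
      exact (hlt hx hr (fun _ _ huv => hdisj _ _ huv) hr' huv huv').le
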